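/- Consider the DAG τ with nodes {x, y, u, v, f₁, f₂, g}, where Vars(τ) = {x, y, u, v} and edges x→f₁, y→f₁, u→f₂, v→f₂, f₁→g, f₂→g. Then no subset T ⊆ τ is a tracking strategy for τ. -/

import Mathlib

/-! The protocol has two funnels, `{x, y} → f₁` and `{u, v} → f₂`. The paths of the two variables
of a funnel either stop at their start (which then lies in `T`) or both pass through the funnel's
apex, which is therefore a shared node and must lie in `T`. So `T` meets both `{x, y, f₁}` and
`{u, v, f₂}`. These two sets are closed under predecessors and disjoint, so no `t_init` reaches a
node of each. -/

/-- `T` is a tracking strategy for the protocol given by edge relation `E` and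
variable set `Vars`, with `↝`-smallest element `tinit`. -/
def IsTrackingStrategy {V : Type*} (E : V → V → Prop) (Vars : Set V)
    (T : Set V) (tinit : V) : Prop :=
  tinit ∈ T ∧ (∀ u ∈ T, Relation.ReflTransGen E tinit u) ∧
  ∃ p : V → List V,
    ∀ x ∈ Vars,
      (p x).head? = some x ∧
      (∃ t ∈ T, (p x).getLast? = some t) ∧
      List.Chain' E (p x) ∧
      ∀ y ∈ Vars, x ≠ y → ∀ w, w ∈ p x → w ∈ p y → w ∈ T

/-- The nodes of the protocol `g(f₁(x,y), f₂(u,v))`. -/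
inductive N7 : Type
  | x | y | u | v | f1 | f2 | g
deriving DecidableEq

/-- The edges of the protocol `g(f₁(x,y), f₂(u,v))`. -/
def E7 : N7 → N7 → Prop := fun a b =>
  (a = N7.x ∧ b = N7.f1) ∨ (a = N7.y ∧ b = N7.f1) ∨
  (a = N7.u ∧ b = N7.f2) ∨ (a = N7.v ∧ b = N7.f2) ∨
  (a = N7.f1 ∧ b = N7.g) ∨ (a = N7.f2 ∧ b = N7.g)

variable {V : Type*} {E : V → V → Prop}

theorem Relation.ReflTransGen.mem_of_mem_of_pred_closed {s : Set V}
    (hs : ∀ a b, E a b → b ∈ s → a ∈ s) {a b : V} (h : Relation.ReflTransGen E a b)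
    (hb : b ∈ s) : a ∈ s := by
  induction h using Relation.ReflTransGen.head_induction_on with
  | refl => exact hb
  | head hac _ ih => exact hs _ _ hac ih

theorem List.IsChain.exists_mem_rel_head {l : List V} (hl : l.IsChain E) {a t : V}
    (hhead : l.head? = some a) (hlast : l.getLast? = some t) (hat : a ≠ t) :
    ∃ w ∈ l, E a w := by
  match l, hl with
  | [], _ => simp at hhead
  | [c], _ => simp_all
  | c :: d :: _, hl =>
    obtain rfl : c = a := by simpa using hhead
    exact ⟨d, by simp, (List.isChain_cons_cons.mp hl).1⟩

namespace IsTrackingStrategy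

variable {Vars T : Set V} {tinit : V}

theorem funnel_inter_nonempty (hT : IsTrackingStrategy E Vars T tinit) {a b c : V}
    (ha : a ∈ Vars) (hb : b ∈ Vars) (hab : a ≠ b) (hac : ∀ w, E a w → w = c)
    (hbc : ∀ w, E b w → w = c) : (({a, b, c} : Set V) ∩ T).Nonempty := by
  obtain ⟨-, -, p, hp⟩ := hT
  have stops_or_passes : ∀ z ∈ Vars, (∀ w, E z w → w = c) → z ∈ T ∨ c ∈ p z := by
    intro z hz hzc
    obtain ⟨hhead, ⟨t, htT, hlast⟩, hchain, -⟩ := hp z hz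
    by_cases hzt : z = t
    · exact .inl (hzt ▸ htT)
    · obtain ⟨w, hw, hzw⟩ := List.IsChain.exists_mem_rel_head hchain hhead hlast hzt
      exact .inr (hzc w hzw ▸ hw)
  rcases stops_or_passes a ha hac with haT | hca
  · exact ⟨a, by simp, haT⟩
  rcases stops_or_passes b hb hbc with hbT | hcb
  · exact ⟨b, by simp, hbT⟩
  exact ⟨c, by simp, (hp a ha).2.2.2 b hb hab c hca hcb⟩

theorem tinit_mem_of_pred_closed (hT : IsTrackingStrategy E Vars T tinit) {s : Set V}
    (hs : ∀ a b, E a b → b ∈ s → a ∈ s) (hsT : (s ∩ T).Nonempty) : tinit ∈ s :=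
  let ⟨_, hts, htT⟩ := hsT
  (hT.2.1 _ htT).mem_of_mem_of_pred_closed hs hts

end IsTrackingStrategy

theorem E7_pred_closed_left :
    ∀ a b, E7 a b → b ∈ ({N7.x, N7.y, N7.f1} : Set N7) → a ∈ ({N7.x, N7.y, N7.f1} : Set N7) := by
  unfold E7; rintro a b (h | h | h | h | h | h) <;> simp_all

theorem E7_pred_closed_right :
    ∀ a b, E7 a b → b ∈ ({N7.u, N7.v, N7.f2} : Set N7) → a ∈ ({N7.u, N7.v, N7.f2} : Set N7) := by
  unfold E7; rintro a b (h | h | h | h | h | h) <;> simp_all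

/-- No subset of the protocol `g(f₁(x,y), f₂(u,v))` is a tracking strategy. -/
theorem no_tracking_strategy :
    ¬ ∃ (T : Set N7) (tinit : N7),
      IsTrackingStrategy E7 {N7.x, N7.y, N7.u, N7.v} T tinit := by
  rintro ⟨T, tinit, hT⟩
  have meets_left := hT.funnel_inter_nonempty (a := N7.x) (b := N7.y) (c := N7.f1)
    (by simp) (by simp) (by decide) (by unfold E7; simp) (by unfold E7; simp)
  have meets_right := hT.funnel_inter_nonempty (a := N7.u) (b := N7.v) (c := N7.f2)
    (by simp) (by simp) (by decide) (by unfold E7; simp) (by unfold E7; simp)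
  have h₁ := hT.tinit_mem_of_pred_closed E7_pred_closed_left meets_left
  have h₂ := hT.tinit_mem_of_pred_closed E7_pred_closed_right meets_right
  simp only [Set.mem_insert_iff, Set.mem_singleton_iff] at h₁ h₂
  rcases h₁ with rfl | rfl | rfl <;> simp at h₂
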